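/- arXiv:1409.0376 — 4 statements merged into one kernel-verified Lean document; each statement's English description precedes it below -/
import Mathlib

section
/- Let ε > 0, δ > 0 and let g : ℝ → ℕ → ℝ be strictly dissipative with rate δ uniformly in n. Fix n ∈ ℕ and x*_n ∈ ℝ with g(x*_n, n) = 0. If x : ℝ → ℝ is differentiable at every t ≥ 0 and satisfies x'(t) = (1/ε)·g(x(t), n) for all t ≥ 0, then for all t ≥ 0 one has |x(t) − x*_n| ≤ |x(0) − x*_n| · exp(−δ·t/ε). (Proposition 'cv:fast': the fast subsystem converges exponentially fast to its quasi-equilibrium, uniformly over the frozen environment n.) -/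
/-!
Along a solution of `x' = F x`, strict dissipativity towards the equilibrium `x⋆` bounds the
derivative of the squared distance `V = ‖x - x⋆‖²` by `V' = 2⟪x - x⋆, F x⟫ ≤ -2k V`. Grönwall's inequality gives
`V t ≤ V 0 · exp (-2k t)`, and taking square roots gives the claimed exponential rate.
-/

open Real InnerProductSpace

theorem le_mul_exp_of_hasDerivAt_le_mul {f f' : ℝ → ℝ} {K : ℝ}
    (hf : ∀ t, 0 ≤ t → HasDerivAt f (f' t) t) (hbound : ∀ t, 0 ≤ t → f' t ≤ K * f t)
    {t : ℝ} (ht : 0 ≤ t) : f t ≤ f 0 * exp (K * t) := by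
  have hcont : ContinuousOn f (Set.Icc 0 t) := fun s hs =>
    (hf s hs.1).continuousAt.continuousWithinAt
  simpa [gronwallBound_ε0] using
    le_gronwallBound_of_liminf_deriv_right_le (K := K) (ε := 0) hcont
      (fun s hs _ hr => (hf s hs.1).hasDerivWithinAt.liminf_right_slope_le hr) le_rfl
      (fun s hs => by simpa using hbound s hs.1) t ⟨ht, le_rfl⟩

theorem norm_sub_le_mul_exp_of_inner_le {E : Type*} [NormedAddCommGroup E]
    [InnerProductSpace ℝ E] {F : E → E} {k : ℝ} {xstar : E}
    (hF : ∀ y, ⟪y - xstar, F y⟫_ℝ ≤ -k * ‖y - xstar‖ ^ 2)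
    {x : ℝ → E} (hx : ∀ t, 0 ≤ t → HasDerivAt x (F (x t)) t) {t : ℝ} (ht : 0 ≤ t) :
    ‖x t - xstar‖ ≤ ‖x 0 - xstar‖ * exp (-k * t) := by
  have hsq : ‖x t - xstar‖ ^ 2 ≤ ‖x 0 - xstar‖ ^ 2 * exp (-2 * k * t) :=
    le_mul_exp_of_hasDerivAt_le_mul (fun s hs => ((hx s hs).sub_const xstar).norm_sq)
      (fun s _ => by linarith [hF (x s)]) ht
  have hexp : exp (-k * t) ^ 2 = exp (-2 * k * t) := by
    rw [← exp_nat_mul]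
    ring_nf
  rwa [← sq_le_sq₀ (norm_nonneg _) (by positivity), mul_pow, hexp]

theorem fast_subsystem_exponential_convergence_general
    (ε δ : ℝ) (hε : 0 < ε) (g : ℝ → ℕ → ℝ)
    (hdiss : ∀ (x₁ x₂ : ℝ) (n : ℕ),
      (x₁ - x₂) * (g x₁ n - g x₂ n) ≤ -δ * (x₁ - x₂) ^ 2)
    (n : ℕ) (xstar : ℝ) (hxstar : g xstar n = 0)
    (x : ℝ → ℝ)
    (hode : ∀ t : ℝ, 0 ≤ t → HasDerivAt x ((1 / ε) * g (x t) n) t) :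
    ∀ t : ℝ, 0 ≤ t → |x t - xstar| ≤ |x 0 - xstar| * Real.exp (-δ * t / ε) := by
  intro t ht
  have hF : ∀ y : ℝ, ⟪y - xstar, (1 / ε) * g y n⟫_ℝ ≤ -(δ / ε) * ‖y - xstar‖ ^ 2 := by
    intro y
    rw [Real.inner_apply, Real.norm_eq_abs, sq_abs]
    calc (y - xstar) * (1 / ε * g y n) = 1 / ε * ((y - xstar) * (g y n - g xstar n)) := by
          rw [hxstar, sub_zero]; ring
      _ ≤ 1 / ε * (-δ * (y - xstar) ^ 2) :=
          mul_le_mul_of_nonneg_left (hdiss y xstar n) (by positivity)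
      _ = -(δ / ε) * (y - xstar) ^ 2 := by ring
  simpa [neg_div, div_mul_eq_mul_div] using norm_sub_le_mul_exp_of_inner_le hF hode ht

/-- Proposition (cv:fast): the fast subsystem converges exponentially fast to its
quasi-equilibrium, uniformly over the frozen environment `n`. -/
theorem fast_subsystem_exponential_convergence
    (ε δ : ℝ) (hε : 0 < ε) (hδ : 0 < δ) (g : ℝ → ℕ → ℝ)
    (hdiss : ∀ (x₁ x₂ : ℝ) (n : ℕ),
      (x₁ - x₂) * (g x₁ n - g x₂ n) ≤ -δ * (x₁ - x₂) ^ 2)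
    (n : ℕ) (xstar : ℝ) (hxstar : g xstar n = 0)
    (x : ℝ → ℝ)
    (hode : ∀ t : ℝ, 0 ≤ t → HasDerivAt x ((1 / ε) * g (x t) n) t) :
    ∀ t : ℝ, 0 ≤ t → |x t - xstar| ≤ |x 0 - xstar| * Real.exp (-δ * t / ε) :=
  fast_subsystem_exponential_convergence_general ε δ hε g hdiss n xstar hxstar x hode
end

section
/- Let ε > 0, δ > 0 and let g : ℝ → ℕ → ℝ be strictly dissipative with rate δ uniformly in n, with g(0, m) > 0 for every m ∈ ℕ and g(0, m) ≤ G for every m ∈ ℕ, where G > 0. Let ν : [0,∞) → ℕ be an arbitrary function and let x : ℝ → ℝ be differentiable at every t ≥ 0 with x'(t) = (1/ε)·g(x(t), ν(t)) for all t ≥ 0 and x(0) > 0. Then for all t ≥ 0, x(t) ≤ (x(0) + G/δ)·exp(−δ·t/ε) + G/δ. (Deterministic, trajectorywise form of the appendix Lemma bounding the fast component x^ε.) -/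
/-! Dissipativity makes `g (·, n)` decrease at rate `δ`, so wherever `x > G / δ > 0` we get
`g (x, n) ≤ g (0, n) - δ x ≤ G - δ x`, i.e. `x' ≤ -(δ/ε) (x - G/δ)`. A fencing argument then
keeps `x` below the barrier `(x 0 + G/δ) exp (-δ t/ε) + G/δ`, which lies above `G / δ`. -/

open Real

theorem le_sub_mul_of_mul_sub_le_neg_mul_sq {f : ℝ → ℝ} {δ a b : ℝ}
    (h : (a - b) * (f a - f b) ≤ -δ * (a - b) ^ 2) (hba : b < a) :
    f a ≤ f b - δ * (a - b) := by
  have hab : 0 < a - b := sub_pos.mpr hba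
  nlinarith

/-- The fencing argument runs against `A * exp (-k * t) + c + η` with `η > 0`, where the
derivative comparison at a touching point is strict; then `η → 0`. -/
theorem le_mul_exp_neg_add_of_hasDerivAt {f f' : ℝ → ℝ} {k c A : ℝ} (hk : 0 < k) (hA : 0 ≤ A)
    (hf : ∀ t, 0 ≤ t → HasDerivAt f (f' t) t) (h0 : f 0 ≤ A + c)
    (hdecay : ∀ t, 0 ≤ t → c < f t → f' t ≤ -k * (f t - c)) {t : ℝ} (ht : 0 ≤ t) :
    f t ≤ A * exp (-k * t) + c := by
  refine le_of_forall_pos_le_add fun η hη => ?_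
  have hB : ∀ s, HasDerivAt (fun s => A * exp (-k * s) + c + η) (A * (exp (-k * s) * -k)) s :=
    fun s => ((((hasDerivAt_id s).const_mul (-k)).exp.const_mul A).add_const c).add_const η
      |>.congr_deriv (by simp)
  refine image_le_of_deriv_right_lt_deriv_boundary (a := 0) (b := t)
    (fun s hs => (hf s hs.1).continuousAt.continuousWithinAt)
    (fun s hs => (hf s hs.1).hasDerivWithinAt)
    (by simp only [mul_zero, exp_zero, mul_one]; linarith) hB ?_ ⟨ht, le_rfl⟩
  intro s hs hfs
  have hpos : 0 ≤ A * exp (-k * s) := mul_nonneg hA (exp_pos _).le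
  calc f' s ≤ -k * (f s - c) := hdecay s hs.1 (by rw [hfs]; linarith)
    _ = -k * (A * exp (-k * s)) - k * η := by rw [hfs]; ring
    _ < A * (exp (-k * s) * -k) := by nlinarith

theorem fast_component_bound_general
    (ε δ G : ℝ) (hε : 0 < ε) (hδ : 0 < δ) (hG : 0 < G) (g : ℝ → ℕ → ℝ)
    (hdiss : ∀ (x₁ x₂ : ℝ) (n : ℕ),
      (x₁ - x₂) * (g x₁ n - g x₂ n) ≤ -δ * (x₁ - x₂) ^ 2)
    (hg0le : ∀ m : ℕ, g 0 m ≤ G)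
    (ν : ℝ → ℕ) (x : ℝ → ℝ)
    (hode : ∀ t : ℝ, 0 ≤ t → HasDerivAt x ((1 / ε) * g (x t) (ν t)) t)
    (h0 : 0 < x 0) :
    ∀ t : ℝ, 0 ≤ t →
      x t ≤ (x 0 + G / δ) * Real.exp (-δ * t / ε) + G / δ := by
  intro t ht
  have hc : 0 < G / δ := div_pos hG hδ
  have hdecay : ∀ s, 0 ≤ s → G / δ < x s →
      1 / ε * g (x s) (ν s) ≤ -(δ / ε) * (x s - G / δ) := fun s _ hs => by
    have hg : g (x s) (ν s) ≤ G - δ * x s := by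
      have := le_sub_mul_of_mul_sub_le_neg_mul_sq (f := (g · (ν s))) (hdiss (x s) 0 (ν s))
        (hc.trans hs)
      linarith [hg0le (ν s)]
    calc 1 / ε * g (x s) (ν s) ≤ 1 / ε * (G - δ * x s) := by gcongr
      _ = -(δ / ε) * (x s - G / δ) := by field_simp; ring
  have hexp : -δ * t / ε = -(δ / ε) * t := by ring
  rw [hexp]
  exact le_mul_exp_neg_add_of_hasDerivAt (div_pos hδ hε) (by positivity) hode
    (by linarith) hdecay ht

/-- Deterministic, trajectorywise form of the appendix Lemma bounding the fast
component: `x t ≤ (x 0 + G/δ)·exp(-δ t/ε) + G/δ`. -/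
theorem fast_component_bound
    (ε δ G : ℝ) (hε : 0 < ε) (hδ : 0 < δ) (hG : 0 < G) (g : ℝ → ℕ → ℝ)
    (hdiss : ∀ (x₁ x₂ : ℝ) (n : ℕ),
      (x₁ - x₂) * (g x₁ n - g x₂ n) ≤ -δ * (x₁ - x₂) ^ 2)
    (hg0pos : ∀ m : ℕ, 0 < g 0 m)
    (hg0le : ∀ m : ℕ, g 0 m ≤ G)
    (ν : ℝ → ℕ) (x : ℝ → ℝ)
    (hode : ∀ t : ℝ, 0 ≤ t → HasDerivAt x ((1 / ε) * g (x t) (ν t)) t)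
    (h0 : 0 < x 0) :
    ∀ t : ℝ, 0 ≤ t →
      x t ≤ (x 0 + G / δ) * Real.exp (-δ * t / ε) + G / δ :=
  fast_component_bound_general ε δ G hε hδ hG g hdiss hg0le ν x hode h0
end

section
/- Let ε > 0, δ > 0, let g : ℝ → ℕ → ℝ be strictly dissipative with rate δ uniformly in n, and let b : ℝ → ℕ → ℝ satisfy the Lipschitz growth condition: there are constants c₁ ≥ 0 and c₂, c₃ > 0 with |b(x, m) − b(y, m)| ≤ c₁·(1 + c₂·m + c₃·m²)·|x − y| for all x, y ∈ ℝ and m ∈ ℕ. Fix m ∈ ℕ and x*_m ∈ ℝ with g(x*_m, m) = 0, fix t₀ < t₁, and let x : ℝ → ℝ be differentiable at every s ∈ [t₀, t₁) with x'(s) = (1/ε)·g(x(s), m) for all s ∈ [t₀, t₁). Then for every s ∈ [t₀, t₁), |b(x(s), m) − b(x*_m, m)| ≤ c₁·(1 + c₂·m + c₃·m²)·|x(t₀) − x*_m|·exp(−δ·(s − t₀)/ε). (Pathwise estimate on an inter-jump interval, the key deterministic step in the appendix Lemma controlling the averaging error.) -/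
/-!
Since `g (x*, m) = 0`, strict dissipativity gives `(y - x*) · g(y, m) / ε ≤ -(δ/ε) (y - x*)²`.
Along the flow, the Lyapunov function `((x(u) - x*) · exp (δ (u - t₀) / ε))²` then has
nonpositive derivative, so it never exceeds its value `(x(t₀) - x*)²` at `t₀`: the distance to
the quasi-equilibrium decays like `exp (-δ (s - t₀) / ε)`. The Lipschitz bound on `b (·, m)`
transfers this decay to the jump rate.
-/

open Real Set

section Dissipative

variable {f x : ℝ → ℝ} {a κ s t₀ t₁ : ℝ}

lemma hasDerivAt_sq_sub_mul_exp (hx : HasDerivAt x (f (x s)) s) :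
    HasDerivAt (fun u => ((x u - a) * exp (κ * (u - t₀))) ^ 2)
      (2 * exp (κ * (s - t₀)) ^ 2 * ((x s - a) * f (x s) + κ * (x s - a) ^ 2)) s := by
  have hexp : HasDerivAt (fun u => exp (κ * (u - t₀))) (exp (κ * (s - t₀)) * κ) s := by
    simpa using (((hasDerivAt_id s).sub_const t₀).const_mul κ).exp
  exact (((hx.sub_const a).fun_mul hexp).fun_pow 2).congr_deriv (by push_cast; ring)

lemma antitoneOn_sq_sub_mul_exp_of_dissipative
    (hf : ∀ y, (y - a) * f y ≤ -κ * (y - a) ^ 2)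
    (hx : ∀ s ∈ Ico t₀ t₁, HasDerivAt x (f (x s)) s) :
    AntitoneOn (fun u => ((x u - a) * exp (κ * (u - t₀))) ^ 2) (Ico t₀ t₁) := by
  refine antitoneOn_of_hasDerivWithinAt_nonpos (convex_Ico t₀ t₁)
    (fun s hs => (hasDerivAt_sq_sub_mul_exp (hx s hs)).continuousAt.continuousWithinAt)
    (fun s hs => (hasDerivAt_sq_sub_mul_exp (hx s (interior_subset hs))).hasDerivWithinAt)
    (fun s _ => ?_)
  have hdiss : (x s - a) * f (x s) + κ * (x s - a) ^ 2 ≤ 0 := by linarith [hf (x s)]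
  exact mul_nonpos_of_nonneg_of_nonpos (by positivity) hdiss

theorem abs_sub_le_mul_exp_of_dissipative
    (hf : ∀ y, (y - a) * f y ≤ -κ * (y - a) ^ 2)
    (hx : ∀ s ∈ Ico t₀ t₁, HasDerivAt x (f (x s)) s) (hs : s ∈ Ico t₀ t₁) :
    |x s - a| ≤ |x t₀ - a| * exp (-κ * (s - t₀)) := by
  have hdecay := antitoneOn_sq_sub_mul_exp_of_dissipative hf hx
    ⟨le_rfl, hs.1.trans_lt hs.2⟩ hs hs.1
  simp only [sub_self, mul_zero, exp_zero, mul_one] at hdecay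
  rw [sq_le_sq, abs_mul, abs_exp] at hdecay
  rwa [neg_mul, exp_neg, ← div_eq_mul_inv, le_div_iff₀ (exp_pos _)]

end Dissipative

lemma nonneg_of_abs_sub_le_mul_abs_sub {h : ℝ → ℝ} {K : ℝ}
    (hK : ∀ y z, |h y - h z| ≤ K * |y - z|) : 0 ≤ K := by
  simpa using (abs_nonneg _).trans (hK 1 0)

theorem interjump_rate_estimate_general
    (ε δ : ℝ) (hε : 0 < ε)
    (g : ℝ → ℕ → ℝ) (b : ℝ → ℕ → ℝ)
    (hdiss : ∀ (x₁ x₂ : ℝ) (n : ℕ),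
      (x₁ - x₂) * (g x₁ n - g x₂ n) ≤ -δ * (x₁ - x₂) ^ 2)
    (c₁ c₂ c₃ : ℝ)
    (hlip : ∀ (x y : ℝ) (m : ℕ),
      |b x m - b y m| ≤ c₁ * (1 + c₂ * (m : ℝ) + c₃ * (m : ℝ) ^ 2) * |x - y|)
    (m : ℕ) (xstar : ℝ) (hxstar : g xstar m = 0)
    (t₀ t₁ : ℝ)
    (x : ℝ → ℝ)
    (hode : ∀ s ∈ Set.Ico t₀ t₁, HasDerivAt x ((1 / ε) * g (x s) m) s) :
    ∀ s ∈ Set.Ico t₀ t₁,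
      |b (x s) m - b xstar m| ≤
        c₁ * (1 + c₂ * (m : ℝ) + c₃ * (m : ℝ) ^ 2) * |x t₀ - xstar| *
          Real.exp (-δ * (s - t₀) / ε) := by
  intro s hs
  set K := c₁ * (1 + c₂ * (m : ℝ) + c₃ * (m : ℝ) ^ 2)
  have hK : 0 ≤ K := nonneg_of_abs_sub_le_mul_abs_sub (fun y z => hlip y z m)
  have hfast : ∀ y, (y - xstar) * ((1 / ε) * g y m) ≤ -(δ / ε) * (y - xstar) ^ 2 := by
    intro y
    have hy := hdiss y xstar m
    rw [hxstar, sub_zero] at hy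
    calc (y - xstar) * ((1 / ε) * g y m) = (1 / ε) * ((y - xstar) * g y m) := by ring
      _ ≤ (1 / ε) * (-δ * (y - xstar) ^ 2) := by gcongr
      _ = -(δ / ε) * (y - xstar) ^ 2 := by ring
  calc |b (x s) m - b xstar m| ≤ K * |x s - xstar| := hlip _ _ _
    _ ≤ K * (|x t₀ - xstar| * exp (-(δ / ε) * (s - t₀))) := by
      gcongr
      exact abs_sub_le_mul_exp_of_dissipative hfast hode hs
    _ = K * |x t₀ - xstar| * exp (-δ * (s - t₀) / ε) := by ring_nf

/-- Pathwise estimate on an inter-jump interval: the key deterministic step in the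
appendix Lemma controlling the averaging error. -/
theorem interjump_rate_estimate
    (ε δ : ℝ) (hε : 0 < ε) (hδ : 0 < δ)
    (g : ℝ → ℕ → ℝ) (b : ℝ → ℕ → ℝ)
    (hdiss : ∀ (x₁ x₂ : ℝ) (n : ℕ),
      (x₁ - x₂) * (g x₁ n - g x₂ n) ≤ -δ * (x₁ - x₂) ^ 2)
    (c₁ c₂ c₃ : ℝ) (hc₁ : 0 ≤ c₁) (hc₂ : 0 < c₂) (hc₃ : 0 < c₃)
    (hlip : ∀ (x y : ℝ) (m : ℕ),
      |b x m - b y m| ≤ c₁ * (1 + c₂ * (m : ℝ) + c₃ * (m : ℝ) ^ 2) * |x - y|)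
    (m : ℕ) (xstar : ℝ) (hxstar : g xstar m = 0)
    (t₀ t₁ : ℝ) (ht : t₀ < t₁)
    (x : ℝ → ℝ)
    (hode : ∀ s ∈ Set.Ico t₀ t₁, HasDerivAt x ((1 / ε) * g (x s) m) s) :
    ∀ s ∈ Set.Ico t₀ t₁,
      |b (x s) m - b xstar m| ≤
        c₁ * (1 + c₂ * (m : ℝ) + c₃ * (m : ℝ) ^ 2) * |x t₀ - xstar| *
          Real.exp (-δ * (s - t₀) / ε) :=
  interjump_rate_estimate_general ε δ hε g b hdiss c₁ c₂ c₃ hlip m xstar hxstar t₀ t₁ x hode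
end

section
/- Let μ(x) = 0.15·x/(1 + x) and g(x, n) = 0.1·(7 − x) − 0.075·n·x/(1 + x) for x > −1 and n ∈ ℕ, let D = 0.1, and for each k ≥ 1 let x*_k > 0 satisfy g(x*_k, k) = 0. Define ρ_i = ∏_{k=1}^{i} ( D / μ(x*_k) ) for i ≥ 1. Then the series ∑_{i≥1} ρ_i diverges (the sequence of partial sums tends to +∞; equivalently, (ρ_i) is not summable). (Divergence of the series ∑ ρ_i, which by the absorption criterion for birth–death chains shows that the averaged predator process is absorbed at 0 with probability one.) -/
/-!
At the equilibrium `x*_k` the zero equation `g(x*_k, k) = 0` reads `k · μ(x*_k) = 0.2 · (7 − x*_k)`,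
which is `< 1.4` because `x*_k > 0`. Hence every factor of `ρ_i` satisfies `D / μ(x*_k) ≥ k / 14`,
so `ρ_i ≥ i! / 14^i → ∞`: the terms do not even tend to `0`.
-/

/-- The Monod consumption function of the numerical example. -/
noncomputable def monod (x : ℝ) : ℝ := 0.15 * x / (1 + x)

/-- The prey drift of the numerical example:
`g(x,n) = 0.1·(7 − x) − 0.075·n·x/(1+x)`. -/
noncomputable def gEx (x : ℝ) (n : ℕ) : ℝ :=
  0.1 * (7 - x) - 0.075 * (n : ℝ) * x / (1 + x)

open Filter Finset
open scoped Nat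

theorem mul_monod_eq_of_gEx_eq_zero {x : ℝ} {n : ℕ} (hx : 1 + x ≠ 0) (h : gEx x n = 0) :
    n * monod x = 0.2 * (7 - x) := by
  unfold gEx at h
  unfold monod
  field_simp at h ⊢
  linarith

theorem monod_pos {x : ℝ} (hx : 0 < x) : 0 < monod x := by
  unfold monod; positivity

theorem le_div_monod_of_gEx_eq_zero {x : ℝ} {n : ℕ} (hx : 0 < x) (h : gEx x n = 0) :
    (n : ℝ) / 14 ≤ 0.1 / monod x := by
  have hmul := mul_monod_eq_of_gEx_eq_zero (by linarith) h
  rw [div_le_div_iff₀ (by norm_num) (monod_pos hx)]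
  linarith

theorem factorial_div_pow_le_prod {a : ℕ → ℝ} {c : ℝ} (hc : 0 < c) (n : ℕ)
    (ha : ∀ k ∈ Icc 1 n, (k : ℝ) / c ≤ a k) :
    (n ! : ℝ) / c ^ n ≤ ∏ k ∈ Icc 1 n, a k := by
  have hprod : ∏ k ∈ Icc 1 n, ((k : ℝ) / c) = n ! / c ^ n := by
    rw [prod_div_distrib, prod_const, Nat.card_Icc, add_tsub_cancel_right, ← Nat.cast_prod,
      ← Ico_add_one_right_eq_Icc, prod_Ico_id_eq_factorial]
  rw [← hprod]
  exact prod_le_prod (fun k _ => by positivity) ha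

theorem tendsto_factorial_div_pow_atTop {c : ℝ} (hc : 0 < c) :
    Tendsto (fun n => (n ! : ℝ) / c ^ n) atTop atTop := by
  refine tendsto_atTop.2 fun M => ?_
  filter_upwards [FloorSemiring.eventually_mul_pow_lt_factorial_sub M c 0] with n hn
  rw [le_div_iff₀ (by positivity)]
  exact_mod_cast hn.le

theorem not_summable_of_tendsto_atTop {f : ℕ → ℝ} (hf : Tendsto f atTop atTop) :
    ¬ Summable f := fun hs =>
  not_tendsto_nhds_of_tendsto_atTop hf 0 hs.tendsto_atTop_zero

theorem tendsto_sum_Icc_atTop_of_tendsto_atTop {f : ℕ → ℝ} (hf₀ : 0 ≤ f)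
    (hf : Tendsto f atTop atTop) : Tendsto (fun N => ∑ i ∈ Icc 1 N, f i) atTop atTop := by
  refine tendsto_atTop_mono' _ ?_ hf
  filter_upwards [eventually_ge_atTop 1] with N hN
  exact single_le_sum (fun i _ => hf₀ i) (mem_Icc.2 ⟨hN, le_rfl⟩)

/-- Divergence of the series `∑ ρ_i`, where
`ρ_i = ∏_{k=1}^{i} (D / μ(x*_k))` with `D = 0.1`: the partial sums tend to `+∞`
and `(ρ_i)` is not summable. By the absorption criterion for birth–death chains
this shows that the averaged predator process is absorbed at `0` with
probability one. -/
theorem rho_series_diverges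
    (xstar : ℕ → ℝ)
    (hpos : ∀ k : ℕ, 1 ≤ k → 0 < xstar k)
    (hzero : ∀ k : ℕ, 1 ≤ k → gEx (xstar k) k = 0)
    (ρ : ℕ → ℝ)
    (hρ : ∀ i : ℕ, ρ i = ∏ k ∈ Finset.Icc 1 i, ((0.1 : ℝ) / monod (xstar k))) :
    Filter.Tendsto (fun N : ℕ => ∑ i ∈ Finset.Icc 1 N, ρ i)
        Filter.atTop Filter.atTop ∧
      ¬ Summable ρ := by
  have hρ_ge : ∀ i, (i ! : ℝ) / 14 ^ i ≤ ρ i := fun i => by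
    rw [hρ i]
    exact factorial_div_pow_le_prod (by norm_num) i fun k hk =>
      le_div_monod_of_gEx_eq_zero (hpos k (mem_Icc.1 hk).1) (hzero k (mem_Icc.1 hk).1)
  have hρ_top : Tendsto ρ atTop atTop :=
    tendsto_atTop_mono hρ_ge (tendsto_factorial_div_pow_atTop (by norm_num))
  have hρ_nonneg : 0 ≤ ρ := fun i => (by positivity : (0 : ℝ) ≤ i ! / 14 ^ i).trans (hρ_ge i)
  exact ⟨tendsto_sum_Icc_atTop_of_tendsto_atTop hρ_nonneg hρ_top,
    not_summable_of_tendsto_atTop hρ_top⟩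
end
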